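/- arXiv:2510.02536 — 6 statements merged into one kernel-verified Lean document; each statement's English description precedes it below -/
import Mathlib

section
/- With 𝒢 the admissibility germ associated to ordered bell-shaped fluxes f_l ≥ f_r, for all (u_l,u_r), (k_l,k_r) ∈ 𝒢 the dissipation inequality Φ_l(u_l,k_l) − Φ_r(u_r,k_r) ≥ 0 holds, where Φ_{l,r}(a,b) := sgn(a−b)(f_{l,r}(a) − f_{l,r}(b)) are the Kruzhkov entropy fluxes. -/
/-!
On the germ the interface is flux-balanced, `f_l k_l = f_r k_r`, so the dissipation equals
`(sgn(u_l - k_l) - sgn(u_r - k_r)) (f_r u_r - f_r k_r)`. It can only be negative if the flux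
increases from `k` to `u` while `k_r < u_r` but not `k_l < u_l` (or symmetrically). That is
impossible: `k_r < u_r` with `f_r k_r < f_r u_r` puts `k_r` on the increasing side of `f_r`,
hence `k_l` on the lower branch `S_l⁻`, where `f_l` is increasing, so `f_l k_l < f_l u_l`
forces `k_l < u_l`.
-/

open Set

/-- The Kruzhkov entropy flux associated with a flux `g`. -/
noncomputable def KruzhkovFlux (g : ℝ → ℝ) (a b : ℝ) : ℝ :=
  Real.sign (a - b) * (g a - g b)

/-- The admissibility germ `𝒢 = 𝒢₁ ∪ 𝒢₂ ∪ 𝒢₃`, described through the right flux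
`fr`, its critical point `αr`, and the lower/upper inverse branches `Sm = S_l⁻`,
`Sp = S_l⁺` of the left flux. -/
def germ (fr Sm Sp : ℝ → ℝ) (αr : ℝ) : Set (ℝ × ℝ) :=
  {p | p.1 ∈ Set.Icc (0:ℝ) 1 ∧ p.2 ∈ Set.Icc (0:ℝ) 1 ∧
    ((p.2 ≤ αr ∧ p.1 = Sm (fr p.2)) ∨ (αr ≤ p.2 ∧ p.1 = Sp (fr p.2)) ∨
     (αr < p.2 ∧ p.1 = Sm (fr p.2)))}

/-- The interface flux of Adimurthi–Jaffré–Gowda. -/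
noncomputable def Fint (fl fr : ℝ → ℝ) (αl αr ul ur : ℝ) : ℝ :=
  min (fl (min ul αl)) (fr (max αr ur))

/-- The remainder term `ℛ`. -/
noncomputable def Rem (fl fr : ℝ → ℝ) (αl αr ul ur : ℝ) : ℝ :=
  |Fint fl fr αl αr ul ur - fl ul| + |Fint fl fr αl αr ul ur - fr ur|

lemma MonotoneOn.lt_of_apply_lt_of_mem_Icc {α β : Type*} [LinearOrder α] [Preorder β]
    {f : α → β} {a b x y : α} (hf : MonotoneOn f (Icc a b)) (hx : x ∈ Icc a b) (hy : a ≤ y)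
    (hxy : f x < f y) : x < y :=
  lt_of_not_ge fun hyx ↦ hxy.not_ge <| hf ⟨hy, hyx.trans hx.2⟩ hx hyx

lemma kruzhkovFlux_sub_nonneg {gl gr : ℝ → ℝ} {ul ur kl kr : ℝ}
    (hu : gl ul = gr ur) (hk : gl kl = gr kr)
    (hlt : gr kr < gr ur → kr < ur → kl < ul) (hgt : gr ur < gr kr → ur < kr → ul < kl) :
    0 ≤ KruzhkovFlux gl ul kl - KruzhkovFlux gr ur kr := by
  have hsign : ∀ x : ℝ, -1 ≤ Real.sign x ∧ Real.sign x ≤ 1 := fun x ↦ by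
    rcases lt_trichotomy x 0 with h | h | h <;> simp [Real.sign_of_neg, Real.sign_of_pos, h]
  obtain ⟨hl₁, hl₂⟩ := hsign (ul - kl)
  obtain ⟨hr₁, hr₂⟩ := hsign (ur - kr)
  rw [KruzhkovFlux, KruzhkovFlux, hu, hk, ← sub_mul]
  rcases lt_trichotomy (gr kr) (gr ur) with hflux | hflux | hflux
  · refine mul_nonneg (sub_nonneg.2 ?_) (sub_nonneg.2 hflux.le)
    rcases lt_trichotomy kr ur with hr | rfl | hr
    · rw [Real.sign_of_pos (sub_pos.2 hr), Real.sign_of_pos (sub_pos.2 (hlt hflux hr))]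
    · exact absurd hflux (lt_irrefl _)
    · rwa [Real.sign_of_neg (sub_neg.2 hr)]
  · simp [hflux]
  · refine mul_nonneg_of_nonpos_of_nonpos (sub_nonpos.2 ?_) (sub_nonpos.2 hflux.le)
    rcases lt_trichotomy ur kr with hr | rfl | hr
    · rw [Real.sign_of_neg (sub_neg.2 hr), Real.sign_of_neg (sub_neg.2 (hgt hflux hr))]
    · exact absurd hflux (lt_irrefl _)
    · rwa [Real.sign_of_pos (sub_pos.2 hr)]

section Germ

variable {fl fr Sm Sp : ℝ → ℝ} {αl αr : ℝ}
  (hfr : MapsTo fr (Icc 0 1) (Icc 0 (fr αr)))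
  (hSm : ∀ y ∈ Icc 0 (fr αr), Sm y ∈ Icc 0 αl ∧ fl (Sm y) = y)
  (hSp : ∀ y ∈ Icc 0 (fr αr), fl (Sp y) = y)

include hfr hSm hSp in
lemma flux_eq_of_mem_germ {p : ℝ × ℝ} (hp : p ∈ germ fr Sm Sp αr) : fl p.1 = fr p.2 := by
  have hy := hfr hp.2.1
  rcases hp.2.2 with ⟨-, h⟩ | ⟨-, h⟩ | ⟨-, h⟩ <;> rw [h]
  exacts [(hSm _ hy).2, hSp _ hy, (hSm _ hy).2]

include hfr hSm hSp in
lemma lt_of_mem_germ (hflmono : MonotoneOn fl (Icc 0 αl)) (hfranti : AntitoneOn fr (Icc αr 1))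
    {p q : ℝ × ℝ} (hp : p ∈ germ fr Sm Sp αr) (hq : q ∈ germ fr Sm Sp αr)
    (hflux : fr q.2 < fr p.2) (hlt : q.2 < p.2) : q.1 < p.1 := by
  have hq₁ : q.1 ∈ Icc 0 αl := by
    rcases hq.2.2 with ⟨-, h⟩ | ⟨hα, -⟩ | ⟨-, h⟩
    · exact h ▸ (hSm _ (hfr hq.2.1)).1
    · exact absurd (hfranti ⟨hα, hq.2.1.2⟩ ⟨hα.trans hlt.le, hp.2.1.2⟩ hlt.le) hflux.not_ge
    · exact h ▸ (hSm _ (hfr hq.2.1)).1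
  refine hflmono.lt_of_apply_lt_of_mem_Icc hq₁ hp.1.1 ?_
  rwa [flux_eq_of_mem_germ hfr hSm hSp hp, flux_eq_of_mem_germ hfr hSm hSp hq]

end Germ

theorem germ_dissipative_general
    (fl fr Sm Sp : ℝ → ℝ) (αl αr : ℝ)
    (hfrpos : ∀ x ∈ Icc (0:ℝ) 1, 0 ≤ fr x)
    (hflmono : StrictMonoOn fl (Icc 0 αl))
    (hfrmono : StrictMonoOn fr (Icc 0 αr)) (hfranti : StrictAntiOn fr (Icc αr 1))
    (hSm : ∀ y ∈ Icc 0 (fr αr), Sm y ∈ Icc 0 αl ∧ fl (Sm y) = y)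
    (hSp : ∀ y ∈ Icc 0 (fr αr), Sp y ∈ Icc αl 1 ∧ fl (Sp y) = y)
    (ul ur kl kr : ℝ)
    (hu : (ul, ur) ∈ germ fr Sm Sp αr) (hk : (kl, kr) ∈ germ fr Sm Sp αr) :
    0 ≤ KruzhkovFlux fl ul kl - KruzhkovFlux fr ur kr := by
  have hfr : MapsTo fr (Icc 0 1) (Icc 0 (fr αr)) := fun x hx ↦
    ⟨hfrpos x hx, isMaxOn_Icc_of_mono_anti hfrmono.monotoneOn hfranti.antitoneOn hx⟩
  have hSp' : ∀ y ∈ Icc 0 (fr αr), fl (Sp y) = y := fun y hy ↦ (hSp y hy).2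
  have hmono := hflmono.monotoneOn
  have hanti := hfranti.antitoneOn
  exact kruzhkovFlux_sub_nonneg (flux_eq_of_mem_germ hfr hSm hSp' hu)
    (flux_eq_of_mem_germ hfr hSm hSp' hk) (lt_of_mem_germ hfr hSm hSp' hmono hanti hu hk)
    (lt_of_mem_germ hfr hSm hSp' hmono hanti hk hu)

/-- Dissipativity of the germ: `Φ_l(u_l,k_l) − Φ_r(u_r,k_r) ≥ 0` on `𝒢 × 𝒢`. -/
theorem germ_dissipative
    (fl fr Sm Sp : ℝ → ℝ) (αl αr : ℝ)
    (hαl : αl ∈ Ioo (0:ℝ) 1) (hαr : αr ∈ Ioo (0:ℝ) 1)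
    (hflLip : ∃ K, LipschitzOnWith K fl (Icc 0 1))
    (hfrLip : ∃ K, LipschitzOnWith K fr (Icc 0 1))
    (hflconc : StrictConcaveOn ℝ (Icc 0 1) fl)
    (hfrconc : StrictConcaveOn ℝ (Icc 0 1) fr)
    (hfl0 : fl 0 = 0) (hfl1 : fl 1 = 0) (hfr0 : fr 0 = 0) (hfr1 : fr 1 = 0)
    (hflpos : ∀ x ∈ Icc (0:ℝ) 1, 0 ≤ fl x)
    (hfrpos : ∀ x ∈ Icc (0:ℝ) 1, 0 ≤ fr x)
    (hflmono : StrictMonoOn fl (Icc 0 αl)) (hflanti : StrictAntiOn fl (Icc αl 1))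
    (hfrmono : StrictMonoOn fr (Icc 0 αr)) (hfranti : StrictAntiOn fr (Icc αr 1))
    (hord : ∀ x ∈ Icc (0:ℝ) 1, fr x ≤ fl x)
    (hSm : ∀ y ∈ Icc 0 (fr αr), Sm y ∈ Icc 0 αl ∧ fl (Sm y) = y)
    (hSp : ∀ y ∈ Icc 0 (fr αr), Sp y ∈ Icc αl 1 ∧ fl (Sp y) = y)
    (ul ur kl kr : ℝ)
    (hu : (ul, ur) ∈ germ fr Sm Sp αr) (hk : (kl, kr) ∈ germ fr Sm Sp αr) :
    0 ≤ KruzhkovFlux fl ul kl - KruzhkovFlux fr ur kr :=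
  germ_dissipative_general fl fr Sm Sp αl αr hfrpos hflmono hfrmono hfranti hSm hSp ul ur kl kr hu
    hk
end

section
/- With 𝒢 the admissibility germ for ordered bell-shaped fluxes f_l ≥ f_r, the germ is maximal: if (u_l,u_r) ∈ [0,1]² satisfies f_l(u_l) = f_r(u_r) and Φ_l(u_l,k_l) − Φ_r(u_r,k_r) ≥ 0 for all (k_l,k_r) ∈ 𝒢, then (u_l,u_r) ∈ 𝒢. -/
open Set

/-!
If `fl ul = fr ur`, inverting `fl` on the branch containing `ul` puts `(ul, ur)` in the germ,
except when `ul > αl` and `ur < αr`. There, pick `ur < kr < αr` and `kl = S_l⁻(fr kr) ≤ αl < ul`: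
both Kruzhkov fluxes reduce to `± (fr ur - fr kr)`, so the dissipation
`Φ_l(ul, kl) - Φ_r(ur, kr) = 2 (fr ur - fr kr)` is negative.
-/

theorem apply_le_of_monotoneOn_of_antitoneOn {α β : Type*} [LinearOrder α] [Preorder β]
    {f : α → β} {a b c x : α} (hmono : MonotoneOn f (Icc a c))
    (hanti : AntitoneOn f (Icc c b)) (hx : x ∈ Icc a b) : f x ≤ f c := by
  rcases le_total x c with hxc | hcx
  · exact hmono ⟨hx.1, hxc⟩ ⟨hx.1.trans hxc, le_rfl⟩ hxc
  · exact hanti ⟨le_rfl, hcx.trans hx.2⟩ ⟨hcx, hx.2⟩ hcx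

theorem kruzhkovFlux_of_lt {g : ℝ → ℝ} {a b : ℝ} (h : b < a) :
    KruzhkovFlux g a b = g a - g b := by
  rw [KruzhkovFlux, Real.sign_of_pos (sub_pos.mpr h), one_mul]

theorem kruzhkovFlux_of_gt {g : ℝ → ℝ} {a b : ℝ} (h : a < b) :
    KruzhkovFlux g a b = g b - g a := by
  rw [KruzhkovFlux, Real.sign_of_neg (sub_neg.mpr h)]
  ring

section Germ

variable {fl fr Sm Sp : ℝ → ℝ} {αl αr ul ur : ℝ}

theorem mem_germ_of_le_critical
    (hfrpos : ∀ x ∈ Icc (0:ℝ) 1, 0 ≤ fr x)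
    (hflmono : StrictMonoOn fl (Icc 0 αl))
    (hfrmono : StrictMonoOn fr (Icc 0 αr)) (hfranti : StrictAntiOn fr (Icc αr 1))
    (hSm : ∀ y ∈ Icc 0 (fr αr), Sm y ∈ Icc 0 αl ∧ fl (Sm y) = y)
    (hul : ul ∈ Icc (0:ℝ) 1) (hur : ur ∈ Icc (0:ℝ) 1) (hRH : fl ul = fr ur)
    (hle : ul ≤ αl) :
    (ul, ur) ∈ germ fr Sm Sp αr := by
  have hfr_max : fr ur ≤ fr αr :=
    apply_le_of_monotoneOn_of_antitoneOn hfrmono.monotoneOn hfranti.antitoneOn hur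
  obtain ⟨hSm_mem, hSm_eq⟩ := hSm (fr ur) ⟨hfrpos ur hur, hfr_max⟩
  have hbranch : ul = Sm (fr ur) :=
    hflmono.injOn ⟨hul.1, hle⟩ hSm_mem (by rw [hSm_eq, hRH])
  refine ⟨hul, hur, ?_⟩
  rcases le_or_gt ur αr with hur_le | hur_gt
  · exact Or.inl ⟨hur_le, hbranch⟩
  · exact Or.inr (Or.inr ⟨hur_gt, hbranch⟩)

theorem mem_germ_of_critical_lt_of_critical_le
    (hfrpos : ∀ x ∈ Icc (0:ℝ) 1, 0 ≤ fr x)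
    (hflanti : StrictAntiOn fl (Icc αl 1))
    (hfrmono : StrictMonoOn fr (Icc 0 αr)) (hfranti : StrictAntiOn fr (Icc αr 1))
    (hSp : ∀ y ∈ Icc 0 (fr αr), Sp y ∈ Icc αl 1 ∧ fl (Sp y) = y)
    (hul : ul ∈ Icc (0:ℝ) 1) (hur : ur ∈ Icc (0:ℝ) 1) (hRH : fl ul = fr ur)
    (hlt : αl < ul) (hle : αr ≤ ur) :
    (ul, ur) ∈ germ fr Sm Sp αr := by
  have hfr_max : fr ur ≤ fr αr :=
    apply_le_of_monotoneOn_of_antitoneOn hfrmono.monotoneOn hfranti.antitoneOn hur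
  obtain ⟨hSp_mem, hSp_eq⟩ := hSp (fr ur) ⟨hfrpos ur hur, hfr_max⟩
  have hbranch : ul = Sp (fr ur) :=
    hflanti.injOn ⟨hlt.le, hul.2⟩ hSp_mem (by rw [hSp_eq, hRH])
  exact ⟨hul, hur, Or.inr (Or.inl ⟨hle, hbranch⟩)⟩

theorem exists_germ_dissipation_neg
    (hαl : αl ≤ 1) (hαr : αr ≤ 1)
    (hfrpos : ∀ x ∈ Icc (0:ℝ) 1, 0 ≤ fr x)
    (hfrmono : StrictMonoOn fr (Icc 0 αr))
    (hSm : ∀ y ∈ Icc 0 (fr αr), Sm y ∈ Icc 0 αl ∧ fl (Sm y) = y)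
    (hur : ur ∈ Icc (0:ℝ) 1) (hRH : fl ul = fr ur)
    (hlt_l : αl < ul) (hlt_r : ur < αr) :
    ∃ k ∈ germ fr Sm Sp αr, KruzhkovFlux fl ul k.1 - KruzhkovFlux fr ur k.2 < 0 := by
  obtain ⟨kr, hur_kr, hkr_αr⟩ := exists_between hlt_r
  have hkr : kr ∈ Icc (0:ℝ) 1 := ⟨hur.1.trans hur_kr.le, hkr_αr.le.trans hαr⟩
  have hfr_lt : fr ur < fr kr := hfrmono ⟨hur.1, hlt_r.le⟩ ⟨hkr.1, hkr_αr.le⟩ hur_kr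
  have hfr_le : fr kr ≤ fr αr :=
    hfrmono.monotoneOn ⟨hkr.1, hkr_αr.le⟩ ⟨hkr.1.trans hkr_αr.le, le_rfl⟩ hkr_αr.le
  obtain ⟨hkl, hkl_eq⟩ := hSm (fr kr) ⟨hfrpos kr hkr, hfr_le⟩
  refine ⟨(Sm (fr kr), kr), ⟨⟨hkl.1, hkl.2.trans hαl⟩, hkr, Or.inl ⟨hkr_αr.le, rfl⟩⟩, ?_⟩
  rw [kruzhkovFlux_of_lt (hkl.2.trans_lt hlt_l), kruzhkovFlux_of_gt hur_kr, hkl_eq, hRH]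
  linarith

end Germ

theorem germ_maximal_general
    (fl fr Sm Sp : ℝ → ℝ) (αl αr : ℝ)
    (hαl : αl ∈ Ioo (0:ℝ) 1) (hαr : αr ∈ Ioo (0:ℝ) 1)
    (hfrpos : ∀ x ∈ Icc (0:ℝ) 1, 0 ≤ fr x)
    (hflmono : StrictMonoOn fl (Icc 0 αl)) (hflanti : StrictAntiOn fl (Icc αl 1))
    (hfrmono : StrictMonoOn fr (Icc 0 αr)) (hfranti : StrictAntiOn fr (Icc αr 1))
    (hSm : ∀ y ∈ Icc 0 (fr αr), Sm y ∈ Icc 0 αl ∧ fl (Sm y) = y)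
    (hSp : ∀ y ∈ Icc 0 (fr αr), Sp y ∈ Icc αl 1 ∧ fl (Sp y) = y)
    (ul ur : ℝ) (hul : ul ∈ Icc (0:ℝ) 1) (hur : ur ∈ Icc (0:ℝ) 1)
    (hRH : fl ul = fr ur)
    (hdiss : ∀ kl kr : ℝ, (kl, kr) ∈ germ fr Sm Sp αr →
      0 ≤ KruzhkovFlux fl ul kl - KruzhkovFlux fr ur kr) :
    (ul, ur) ∈ germ fr Sm Sp αr := by
  rcases le_or_gt ul αl with hle_l | hlt_l
  · exact mem_germ_of_le_critical hfrpos hflmono hfrmono hfranti hSm hul hur hRH hle_l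
  rcases le_or_gt αr ur with hle_r | hlt_r
  · exact mem_germ_of_critical_lt_of_critical_le hfrpos hflanti hfrmono hfranti hSp
      hul hur hRH hlt_l hle_r
  obtain ⟨k, hk, hneg⟩ :=
    exists_germ_dissipation_neg hαl.2.le hαr.2.le hfrpos hfrmono hSm hur hRH hlt_l hlt_r
  exact absurd (hdiss k.1 k.2 hk) hneg.not_ge

/-- Maximality of the germ. -/
theorem germ_maximal
    (fl fr Sm Sp : ℝ → ℝ) (αl αr : ℝ)
    (hαl : αl ∈ Ioo (0:ℝ) 1) (hαr : αr ∈ Ioo (0:ℝ) 1)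
    (hflLip : ∃ K, LipschitzOnWith K fl (Icc 0 1))
    (hfrLip : ∃ K, LipschitzOnWith K fr (Icc 0 1))
    (hflconc : StrictConcaveOn ℝ (Icc 0 1) fl)
    (hfrconc : StrictConcaveOn ℝ (Icc 0 1) fr)
    (hfl0 : fl 0 = 0) (hfl1 : fl 1 = 0) (hfr0 : fr 0 = 0) (hfr1 : fr 1 = 0)
    (hflpos : ∀ x ∈ Icc (0:ℝ) 1, 0 ≤ fl x)
    (hfrpos : ∀ x ∈ Icc (0:ℝ) 1, 0 ≤ fr x)
    (hflmono : StrictMonoOn fl (Icc 0 αl)) (hflanti : StrictAntiOn fl (Icc αl 1))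
    (hfrmono : StrictMonoOn fr (Icc 0 αr)) (hfranti : StrictAntiOn fr (Icc αr 1))
    (hord : ∀ x ∈ Icc (0:ℝ) 1, fr x ≤ fl x)
    (hSm : ∀ y ∈ Icc 0 (fr αr), Sm y ∈ Icc 0 αl ∧ fl (Sm y) = y)
    (hSp : ∀ y ∈ Icc 0 (fr αr), Sp y ∈ Icc αl 1 ∧ fl (Sp y) = y)
    (ul ur : ℝ) (hul : ul ∈ Icc (0:ℝ) 1) (hur : ur ∈ Icc (0:ℝ) 1)
    (hRH : fl ul = fr ur)
    (hdiss : ∀ kl kr : ℝ, (kl, kr) ∈ germ fr Sm Sp αr →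
      0 ≤ KruzhkovFlux fl ul kl - KruzhkovFlux fr ur kr) :
    (ul, ur) ∈ germ fr Sm Sp αr :=
  germ_maximal_general fl fr Sm Sp αl αr hαl hαr hfrpos hflmono hflanti hfrmono hfranti hSm hSp ul
    ur hul hur hRH hdiss
end

section
/- Define the interface flux F_int(u_l,u_r) := min{f_l(min(u_l,α_l)), f_r(max(α_r,u_r))} and the remainder ℛ(u_l,u_r) := |F_int(u_l,u_r) − f_l(u_l)| + |F_int(u_l,u_r) − f_r(u_r)|. Then for all (u_l,u_r) ∈ [0,1]², (u_l,u_r) belongs to the germ 𝒢 if and only if ℛ(u_l,u_r) = 0. -/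
open Set

/-!
Both sides say that `fl ul = fr ur` and that not both `αl < ul` and `ur < αr`. For the
remainder, truncating `ul` at the peak `αl` (resp. `ur` at `αr`) can only raise the flux, and
raises it strictly when `αl < ul` (resp. `ur < αr`); for the germ, `fl` is injective on either
side of `αl`, so `ul` is recovered from `fr ur` as `S_l⁻ (fr ur)` or `S_l⁺ (fr ur)`.
-/

section BellShaped

variable {f : ℝ → ℝ} {a b c x : ℝ}

theorem apply_le_apply_of_monotoneOn_of_antitoneOn (hmono : MonotoneOn f (Icc a c))
    (hanti : AntitoneOn f (Icc c b)) (hx : x ∈ Icc a b) : f x ≤ f c := by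
  rcases le_total x c with hxc | hcx
  · exact hmono ⟨hx.1, hxc⟩ ⟨hx.1.trans hxc, le_rfl⟩ hxc
  · exact hanti ⟨le_rfl, hcx.trans hx.2⟩ ⟨hcx, hx.2⟩ hcx

theorem apply_le_apply_min (hanti : AntitoneOn f (Icc c b)) (hxb : x ≤ b) :
    f x ≤ f (min x c) := by
  rcases le_total x c with hxc | hcx
  · rw [min_eq_left hxc]
  · rw [min_eq_right hcx]
    exact hanti ⟨le_rfl, hcx.trans hxb⟩ ⟨hcx, hxb⟩ hcx

theorem apply_le_apply_max (hmono : MonotoneOn f (Icc a c)) (hax : a ≤ x) :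
    f x ≤ f (max c x) := by
  rcases le_total c x with hcx | hxc
  · rw [max_eq_right hcx]
  · rw [max_eq_left hxc]
    exact hmono ⟨hax, hxc⟩ ⟨hax.trans hxc, le_rfl⟩ hxc

end BellShaped

theorem rem_eq_zero_iff (fl fr : ℝ → ℝ) (αl αr ul ur : ℝ) :
    Rem fl fr αl αr ul ur = 0 ↔
      Fint fl fr αl αr ul ur = fl ul ∧ Fint fl fr αl αr ul ur = fr ur := by
  rw [Rem, add_eq_zero_iff_of_nonneg (abs_nonneg _) (abs_nonneg _), abs_eq_zero, abs_eq_zero,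
    sub_eq_zero, sub_eq_zero]

theorem fint_eq_left_and_eq_right_iff {fl fr : ℝ → ℝ} {αl αr ul ur : ℝ}
    (hflanti : StrictAntiOn fl (Icc αl 1)) (hfrmono : StrictMonoOn fr (Icc 0 αr))
    (hul : ul ≤ 1) (hur : 0 ≤ ur) :
    Fint fl fr αl αr ul ur = fl ul ∧ Fint fl fr αl αr ul ur = fr ur ↔
      fl ul = fr ur ∧ (ul ≤ αl ∨ αr ≤ ur) := by
  constructor
  · rintro ⟨hFl, hFr⟩
    refine ⟨hFl.symm.trans hFr, ?_⟩
    by_contra! ⟨hαlul, hurαr⟩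
    have hFpeaks : Fint fl fr αl αr ul ur = min (fl αl) (fr αr) := by
      rw [Fint, min_eq_right hαlul.le, max_eq_left hurαr.le]
    have hl : fl ul < fl αl := hflanti ⟨le_rfl, hαlul.le.trans hul⟩ ⟨hαlul.le, hul⟩ hαlul
    have hr : fr ur < fr αr := hfrmono ⟨hur, hurαr.le⟩ ⟨hur.trans hurαr.le, le_rfl⟩ hurαr
    exact (lt_min (hFl.trans_lt hl) (hFr.trans_lt hr)).ne hFpeaks
  · rintro ⟨hflr, hαlul | hαrur⟩
    · have hr := apply_le_apply_max hfrmono.monotoneOn hur (c := αr)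
      have hF : Fint fl fr αl αr ul ur = fl ul := by
        rw [Fint, min_eq_left hαlul, min_eq_left (hflr ▸ hr)]
      exact ⟨hF, hF.trans hflr⟩
    · have hl := apply_le_apply_min hflanti.antitoneOn hul (c := αl)
      have hF : Fint fl fr αl αr ul ur = fr ur := by
        rw [Fint, max_eq_right hαrur, min_eq_right (hflr ▸ hl)]
      exact ⟨hF.trans hflr.symm, hF⟩

theorem mem_germ_iff {fl fr Sm Sp : ℝ → ℝ} {αl αr ul ur : ℝ}
    (hflmono : StrictMonoOn fl (Icc 0 αl)) (hflanti : StrictAntiOn fl (Icc αl 1))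
    (hSm : ∀ y ∈ Icc 0 (fr αr), Sm y ∈ Icc 0 αl ∧ fl (Sm y) = y)
    (hSp : ∀ y ∈ Icc 0 (fr αr), Sp y ∈ Icc αl 1 ∧ fl (Sp y) = y)
    (hul : ul ∈ Icc (0:ℝ) 1) (hur : ur ∈ Icc (0:ℝ) 1) (hy : fr ur ∈ Icc 0 (fr αr)) :
    (ul, ur) ∈ germ fr Sm Sp αr ↔ fl ul = fr ur ∧ (ul ≤ αl ∨ αr ≤ ur) := by
  obtain ⟨hSmI, hSmv⟩ := hSm (fr ur) hy
  obtain ⟨hSpI, hSpv⟩ := hSp (fr ur) hy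
  simp only [germ, mem_ofPred_eq]
  constructor
  · rintro ⟨-, -, ⟨-, rfl⟩ | ⟨hαrur, rfl⟩ | ⟨-, rfl⟩⟩
    · exact ⟨hSmv, Or.inl hSmI.2⟩
    · exact ⟨hSpv, Or.inr hαrur⟩
    · exact ⟨hSmv, Or.inl hSmI.2⟩
  · rintro ⟨hflr, hbranch⟩
    refine ⟨hul, hur, ?_⟩
    by_cases hulαl : ul ≤ αl
    · have hlower : ul = Sm (fr ur) :=
        hflmono.injOn ⟨hul.1, hulαl⟩ hSmI (hflr.trans hSmv.symm)
      rcases le_or_gt ur αr with hurαr | hαrur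
      · exact Or.inl ⟨hurαr, hlower⟩
      · exact Or.inr (Or.inr ⟨hαrur, hlower⟩)
    · have hupper : ul = Sp (fr ur) :=
        hflanti.injOn ⟨(not_le.1 hulαl).le, hul.2⟩ hSpI (hflr.trans hSpv.symm)
      exact Or.inr (Or.inl ⟨hbranch.resolve_left hulαl, hupper⟩)

theorem germ_iff_remainder_eq_zero_general
    (fl fr Sm Sp : ℝ → ℝ) (αl αr : ℝ)
    (hfrpos : ∀ x ∈ Icc (0:ℝ) 1, 0 ≤ fr x)
    (hflmono : StrictMonoOn fl (Icc 0 αl)) (hflanti : StrictAntiOn fl (Icc αl 1))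
    (hfrmono : StrictMonoOn fr (Icc 0 αr)) (hfranti : StrictAntiOn fr (Icc αr 1))
    (hSm : ∀ y ∈ Icc 0 (fr αr), Sm y ∈ Icc 0 αl ∧ fl (Sm y) = y)
    (hSp : ∀ y ∈ Icc 0 (fr αr), Sp y ∈ Icc αl 1 ∧ fl (Sp y) = y)
    (ul ur : ℝ) (hul : ul ∈ Icc (0:ℝ) 1) (hur : ur ∈ Icc (0:ℝ) 1) :
    (ul, ur) ∈ germ fr Sm Sp αr ↔ Rem fl fr αl αr ul ur = 0 := by
  have hy : fr ur ∈ Icc 0 (fr αr) :=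
    ⟨hfrpos ur hur, apply_le_apply_of_monotoneOn_of_antitoneOn hfrmono.monotoneOn
      hfranti.antitoneOn hur⟩
  rw [mem_germ_iff hflmono hflanti hSm hSp hul hur hy, rem_eq_zero_iff,
    fint_eq_left_and_eq_right_iff hflanti hfrmono hul.2 hur.1]

/-- Characterization of the germ through the remainder term: `(u_l,u_r) ∈ 𝒢 ↔ ℛ(u_l,u_r) = 0`. -/
theorem germ_iff_remainder_eq_zero
    (fl fr Sm Sp : ℝ → ℝ) (αl αr : ℝ)
    (hαl : αl ∈ Ioo (0:ℝ) 1) (hαr : αr ∈ Ioo (0:ℝ) 1)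
    (hflLip : ∃ K, LipschitzOnWith K fl (Icc 0 1))
    (hfrLip : ∃ K, LipschitzOnWith K fr (Icc 0 1))
    (hflconc : StrictConcaveOn ℝ (Icc 0 1) fl)
    (hfrconc : StrictConcaveOn ℝ (Icc 0 1) fr)
    (hfl0 : fl 0 = 0) (hfl1 : fl 1 = 0) (hfr0 : fr 0 = 0) (hfr1 : fr 1 = 0)
    (hflpos : ∀ x ∈ Icc (0:ℝ) 1, 0 ≤ fl x)
    (hfrpos : ∀ x ∈ Icc (0:ℝ) 1, 0 ≤ fr x)
    (hflmono : StrictMonoOn fl (Icc 0 αl)) (hflanti : StrictAntiOn fl (Icc αl 1))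
    (hfrmono : StrictMonoOn fr (Icc 0 αr)) (hfranti : StrictAntiOn fr (Icc αr 1))
    (hord : ∀ x ∈ Icc (0:ℝ) 1, fr x ≤ fl x)
    (hSm : ∀ y ∈ Icc 0 (fr αr), Sm y ∈ Icc 0 αl ∧ fl (Sm y) = y)
    (hSp : ∀ y ∈ Icc 0 (fr αr), Sp y ∈ Icc αl 1 ∧ fl (Sp y) = y)
    (ul ur : ℝ) (hul : ul ∈ Icc (0:ℝ) 1) (hur : ur ∈ Icc (0:ℝ) 1) :
    (ul, ur) ∈ germ fr Sm Sp αr ↔ Rem fl fr αl αr ul ur = 0 :=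
  germ_iff_remainder_eq_zero_general fl fr Sm Sp αl αr hfrpos hflmono hflanti hfrmono hfranti hSm
    hSp ul ur hul hur
end

section
/- With F_int, ℛ, 𝒢, Φ_l, Φ_r as above, for all (u_l,u_r) ∈ [0,1]² and all (k_l,k_r) ∈ 𝒢, the inequality Φ_r(u_r,k_r) − Φ_l(u_l,k_l) ≤ ℛ(u_l,u_r) holds. -/
open Set

/-!
On the germ both states carry one flux `c = f_l(k_l) = f_r(k_r)`. Unfolding the signs,
`Φ_r(u_r,k_r) − Φ_l(u_l,k_l)` is bounded by `ℛ(u_l,u_r)` (which dominates every signed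
combination of `F_int − f_l(u_l)` and `F_int − f_r(u_r)`) as soon as `c ≤ F_int` when
`k_l ≤ u_l`, `u_r ≤ k_r`, and `F_int ≤ c` when `u_l ≤ k_l`, `k_r ≤ u_r`. Both comparisons follow
from `F_int` being the minimum of the nondecreasing demand `u ↦ f_l(u ∧ α_l)` and the
nonincreasing supply `u ↦ f_r(α_r ∨ u)`, which dominate the fluxes themselves; the second one
also uses the germ condition `k_l ≤ α_l ∨ α_r ≤ k_r`.
-/

theorem kruzhkovFlux_of_le {g : ℝ → ℝ} {a b : ℝ} (h : b ≤ a) :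
    KruzhkovFlux g a b = g a - g b := by
  rcases h.eq_or_lt with rfl | h
  · simp [KruzhkovFlux]
  · rw [KruzhkovFlux, Real.sign_of_pos (sub_pos.mpr h), one_mul]

theorem kruzhkovFlux_of_ge {g : ℝ → ℝ} {a b : ℝ} (h : a ≤ b) :
    KruzhkovFlux g a b = g b - g a := by
  rcases h.eq_or_lt with rfl | h
  · simp [KruzhkovFlux]
  · rw [KruzhkovFlux, Real.sign_of_neg (sub_neg.mpr h)]
    ring

theorem kruzhkovFlux_sub_le {g h : ℝ → ℝ} {a b k l F : ℝ} (hc : g k = h l)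
    (hle : k ≤ a → b ≤ l → h l ≤ F) (hge : a ≤ k → l ≤ b → F ≤ h l) :
    KruzhkovFlux h b l - KruzhkovFlux g a k ≤ |F - g a| + |F - h b| := by
  have := le_abs_self (F - g a)
  have := neg_abs_le (F - g a)
  have := le_abs_self (F - h b)
  have := neg_abs_le (F - h b)
  rcases le_total b l with hb | hb <;> rcases le_total a k with ha | ha
  · rw [kruzhkovFlux_of_ge hb, kruzhkovFlux_of_ge ha, hc]; linarith
  · rw [kruzhkovFlux_of_ge hb, kruzhkovFlux_of_le ha, hc]; linarith [hle ha hb]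
  · rw [kruzhkovFlux_of_le hb, kruzhkovFlux_of_ge ha, hc]; linarith [hge ha hb]
  · rw [kruzhkovFlux_of_le hb, kruzhkovFlux_of_le ha, hc]; linarith

section Bell

variable {f : ℝ → ℝ} {a b α u : ℝ}

theorem le_of_monotoneOn_of_antitoneOn (hmono : MonotoneOn f (Icc a α))
    (hanti : AntitoneOn f (Icc α b)) (hu : u ∈ Icc a b) : f u ≤ f α := by
  rcases le_total u α with h | h
  · exact hmono ⟨hu.1, h⟩ ⟨hu.1.trans h, le_rfl⟩ h
  · exact hanti ⟨le_rfl, h.trans hu.2⟩ ⟨h, hu.2⟩ h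

def demand (f : ℝ → ℝ) (α u : ℝ) : ℝ := f (min u α)

def supply (f : ℝ → ℝ) (α u : ℝ) : ℝ := f (max α u)

theorem demand_of_le (h : u ≤ α) : demand f α u = f u := by
  rw [demand, min_eq_left h]

theorem supply_of_ge (h : α ≤ u) : supply f α u = f u := by
  rw [supply, max_eq_right h]

theorem demand_monotoneOn (hmono : MonotoneOn f (Icc a α)) :
    MonotoneOn (demand f α) (Ici a) := by
  intro u hu v _ huv
  rcases le_total u α with h | h
  · rw [demand, demand, min_eq_left h]
    exact hmono ⟨hu, h⟩ ⟨le_min (hu.trans huv) (hu.trans h), min_le_right _ _⟩ (le_min huv h)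
  · rw [demand, demand, min_eq_right h, min_eq_right (h.trans huv)]

theorem supply_antitoneOn (hanti : AntitoneOn f (Icc α b)) :
    AntitoneOn (supply f α) (Iic b) := by
  intro u _ v hv huv
  rcases le_total α v with h | h
  · rw [supply, supply, max_eq_right h]
    exact hanti ⟨le_max_left _ _, max_le (h.trans hv) (huv.trans hv)⟩ ⟨h, hv⟩ (max_le h huv)
  · rw [supply, supply, max_eq_left h, max_eq_left (huv.trans h)]

theorem le_demand (hanti : AntitoneOn f (Icc α b)) (hu : u ≤ b) : f u ≤ demand f α u := by
  rcases le_total u α with h | h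
  · rw [demand_of_le h]
  · rw [demand, min_eq_right h]
    exact hanti ⟨le_rfl, h.trans hu⟩ ⟨h, hu⟩ h

theorem le_supply (hmono : MonotoneOn f (Icc a α)) (hu : a ≤ u) : f u ≤ supply f α u := by
  rcases le_total α u with h | h
  · rw [supply_of_ge h]
  · rw [supply, max_eq_left h]
    exact hmono ⟨hu, h⟩ ⟨hu.trans h, le_rfl⟩ h

end Bell

theorem fint_eq_min_demand_supply (fl fr : ℝ → ℝ) (αl αr ul ur : ℝ) :
    Fint fl fr αl αr ul ur = min (demand fl αl ul) (supply fr αr ur) :=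
  rfl

theorem flux_eq_and_le_or_le_of_mem_germ {fl fr Sm Sp : ℝ → ℝ} {αl αr kl kr : ℝ}
    (hfrpos : ∀ x ∈ Icc (0:ℝ) 1, 0 ≤ fr x)
    (hfrmono : MonotoneOn fr (Icc 0 αr)) (hfranti : AntitoneOn fr (Icc αr 1))
    (hSm : ∀ y ∈ Icc 0 (fr αr), Sm y ∈ Icc 0 αl ∧ fl (Sm y) = y)
    (hSp : ∀ y ∈ Icc 0 (fr αr), Sp y ∈ Icc αl 1 ∧ fl (Sp y) = y)
    (hk : (kl, kr) ∈ germ fr Sm Sp αr) :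
    fl kl = fr kr ∧ (kl ≤ αl ∨ αr ≤ kr) := by
  obtain ⟨-, hkr, hbranch⟩ := hk
  dsimp only at hkr hbranch
  have hc : fr kr ∈ Icc 0 (fr αr) :=
    ⟨hfrpos kr hkr, le_of_monotoneOn_of_antitoneOn hfrmono hfranti hkr⟩
  rcases hbranch with ⟨-, rfl⟩ | ⟨h, rfl⟩ | ⟨h, rfl⟩
  · exact ⟨(hSm _ hc).2, .inl (hSm _ hc).1.2⟩
  · exact ⟨(hSp _ hc).2, .inr h⟩
  · exact ⟨(hSm _ hc).2, .inr h.le⟩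

theorem remainder_controls_dissipation_general
    (fl fr Sm Sp : ℝ → ℝ) (αl αr : ℝ)
    (hfrpos : ∀ x ∈ Icc (0:ℝ) 1, 0 ≤ fr x)
    (hflmono : StrictMonoOn fl (Icc 0 αl)) (hflanti : StrictAntiOn fl (Icc αl 1))
    (hfrmono : StrictMonoOn fr (Icc 0 αr)) (hfranti : StrictAntiOn fr (Icc αr 1))
    (hSm : ∀ y ∈ Icc 0 (fr αr), Sm y ∈ Icc 0 αl ∧ fl (Sm y) = y)
    (hSp : ∀ y ∈ Icc 0 (fr αr), Sp y ∈ Icc αl 1 ∧ fl (Sp y) = y)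
    (ul ur kl kr : ℝ) (hul : ul ∈ Icc (0:ℝ) 1) (hur : ur ∈ Icc (0:ℝ) 1)
    (hk : (kl, kr) ∈ germ fr Sm Sp αr) :
    KruzhkovFlux fr ur kr - KruzhkovFlux fl ul kl ≤ Rem fl fr αl αr ul ur := by
  obtain ⟨hflux, hcrit⟩ := flux_eq_and_le_or_le_of_mem_germ hfrpos hfrmono.monotoneOn
    hfranti.antitoneOn hSm hSp hk
  obtain ⟨hkl, hkr, -⟩ := hk
  have hdemand := demand_monotoneOn hflmono.monotoneOn
  have hsupply := supply_antitoneOn hfranti.antitoneOn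
  refine kruzhkovFlux_sub_le hflux (fun hl hr ↦ ?_) (fun hl hr ↦ ?_)
  · rw [fint_eq_min_demand_supply]
    refine le_min ?_ ?_
    · calc fr kr = fl kl := hflux.symm
        _ ≤ demand fl αl kl := le_demand hflanti.antitoneOn hkl.2
        _ ≤ demand fl αl ul := hdemand hkl.1 hul.1 hl
    · calc fr kr ≤ supply fr αr kr := le_supply hfrmono.monotoneOn hkr.1
        _ ≤ supply fr αr ur := hsupply hur.2 hkr.2 hr
  · rw [fint_eq_min_demand_supply]
    rcases hcrit with h | h
    · calc _ ≤ demand fl αl ul := min_le_left _ _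
        _ ≤ demand fl αl kl := hdemand hul.1 hkl.1 hl
        _ = fr kr := by rw [demand_of_le h, hflux]
    · calc _ ≤ supply fr αr ur := min_le_right _ _
        _ ≤ supply fr αr kr := hsupply hkr.2 hur.2 hr
        _ = fr kr := supply_of_ge h

/-- Approximate dissipativity: `Φ_r(u_r,k_r) − Φ_l(u_l,k_l) ≤ ℛ(u_l,u_r)` for `(k_l,k_r) ∈ 𝒢`. -/
theorem remainder_controls_dissipation
    (fl fr Sm Sp : ℝ → ℝ) (αl αr : ℝ)
    (hαl : αl ∈ Ioo (0:ℝ) 1) (hαr : αr ∈ Ioo (0:ℝ) 1)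
    (hflLip : ∃ K, LipschitzOnWith K fl (Icc 0 1))
    (hfrLip : ∃ K, LipschitzOnWith K fr (Icc 0 1))
    (hflconc : StrictConcaveOn ℝ (Icc 0 1) fl)
    (hfrconc : StrictConcaveOn ℝ (Icc 0 1) fr)
    (hfl0 : fl 0 = 0) (hfl1 : fl 1 = 0) (hfr0 : fr 0 = 0) (hfr1 : fr 1 = 0)
    (hflpos : ∀ x ∈ Icc (0:ℝ) 1, 0 ≤ fl x)
    (hfrpos : ∀ x ∈ Icc (0:ℝ) 1, 0 ≤ fr x)
    (hflmono : StrictMonoOn fl (Icc 0 αl)) (hflanti : StrictAntiOn fl (Icc αl 1))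
    (hfrmono : StrictMonoOn fr (Icc 0 αr)) (hfranti : StrictAntiOn fr (Icc αr 1))
    (hord : ∀ x ∈ Icc (0:ℝ) 1, fr x ≤ fl x)
    (hSm : ∀ y ∈ Icc 0 (fr αr), Sm y ∈ Icc 0 αl ∧ fl (Sm y) = y)
    (hSp : ∀ y ∈ Icc 0 (fr αr), Sp y ∈ Icc αl 1 ∧ fl (Sp y) = y)
    (ul ur kl kr : ℝ) (hul : ul ∈ Icc (0:ℝ) 1) (hur : ur ∈ Icc (0:ℝ) 1)
    (hk : (kl, kr) ∈ germ fr Sm Sp αr) :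
    KruzhkovFlux fr ur kr - KruzhkovFlux fl ul kl ≤ Rem fl fr αl αr ul ur :=
  remainder_controls_dissipation_general fl fr Sm Sp αl αr hfrpos hflmono hflanti hfrmono hfranti
    hSm hSp ul ur kl kr hul hur hk
end

section
/- Consistency estimate for the interface flux: there exists μ > 0 such that for all k ∈ [0,1], all n ∈ ℕ and all j ∈ ℤ, |F_{j+1/2}^n(k,k) − f_j^n(k)| ≤ μ |w_{j+1}^n − w_j^n|. One may take μ = ‖α'‖_∞ · sup_{p,ω}|∂ρ f(p,ω)| + sup_p |f_max(p) − f_min(p)|. -/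
/-!
Strict concavity and `∂ρ f(α ω, ω) = 0` make each `f^ω` increasing on `[0, α ω]` and decreasing
on `[α ω, 1]`. Hence `f_j(k) ≤ f_j(k ∧ α_j)` and `f_{j+1}(k) ≤ f_{j+1}(α_{j+1} ∨ k)`, which bounds
the interface flux at `(k, k)` from below by `f_j(k)` up to the error of comparing `f_{j+1}` with
`f_j` at one density. From above, `F ≤ f_j(k)` if `k ≤ α_j`; otherwise `F ≤ f_{j+1}(k)` or, when
`α_j < k < α_{j+1}`, `F ≤ f_{j+1}(α_{j+1})` while `f_j(α_{j+1}) ≤ f_j(k)`. Since `f` is affine in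
`w`, each such comparison costs at most `sup |f_max - f_min| · |w_{j+1} - w_j|`.
-/

open Set

/-- The GARZ flux `f(ρ,w) = ρ((1-w)V_min(ρ) + w V_max(ρ))`. -/
noncomputable def flux (Vmin Vmax : ℝ → ℝ) (ρ w : ℝ) : ℝ :=
  ρ * ((1 - w) * Vmin ρ + w * Vmax ρ)

/-- The numerical interface flux `F_{j+1/2}ⁿ(u_l,u_r) = min{f_jⁿ(u_l ∧ α_jⁿ),
f_{j+1}ⁿ(α_{j+1}ⁿ ∨ u_r)}`, with `wl = w_jⁿ`, `wr = w_{j+1}ⁿ`. -/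
noncomputable def interfaceFlux (Vmin Vmax α : ℝ → ℝ) (wl wr ul ur : ℝ) : ℝ :=
  min (flux Vmin Vmax (min ul (α wl)) wl) (flux Vmin Vmax (max (α wr) ur) wr)

section Unimodal

variable {f : ℝ → ℝ} {p q c : ℝ}

theorem strictAntiOn_deriv_of_deriv_deriv_neg {s : Set ℝ} (hs : Convex ℝ s)
    (hf : ∀ x ∈ s, deriv (deriv f) x < 0) : StrictAntiOn (deriv f) s :=
  strictAntiOn_of_deriv_neg hs
    (fun x hx => (differentiableAt_of_deriv_ne_zero (hf x hx).ne).continuousAt.continuousWithinAt)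
    (fun x hx => hf x (interior_subset hx))

theorem monotoneOn_Icc_of_deriv_eq_zero_of_deriv_deriv_neg (hf : ContinuousOn f (Icc p q))
    (hf'' : ∀ x ∈ Icc p q, deriv (deriv f) x < 0) (hcq : c ≤ q) (hfc : deriv f c = 0) :
    MonotoneOn f (Icc p c) := by
  refine (strictMonoOn_of_deriv_pos (convex_Icc p c) (hf.mono (Icc_subset_Icc_right hcq))
    fun x hx => ?_).monotoneOn
  rw [interior_Icc] at hx
  have hc : c ∈ Icc p q := ⟨hx.1.le.trans hx.2.le, hcq⟩
  simpa only [hfc] using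
    strictAntiOn_deriv_of_deriv_deriv_neg (convex_Icc p q) hf'' ⟨hx.1.le, hx.2.le.trans hcq⟩ hc hx.2

theorem antitoneOn_Icc_of_deriv_eq_zero_of_deriv_deriv_neg (hf : ContinuousOn f (Icc p q))
    (hf'' : ∀ x ∈ Icc p q, deriv (deriv f) x < 0) (hpc : p ≤ c) (hfc : deriv f c = 0) :
    AntitoneOn f (Icc c q) := by
  refine (strictAntiOn_of_deriv_neg (convex_Icc c q) (hf.mono (Icc_subset_Icc_left hpc))
    fun x hx => ?_).antitoneOn
  rw [interior_Icc] at hx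
  have hc : c ∈ Icc p q := ⟨hpc, hx.1.le.trans hx.2.le⟩
  simpa only [hfc] using
    strictAntiOn_deriv_of_deriv_deriv_neg (convex_Icc p q) hf'' hc ⟨hpc.trans hx.1.le, hx.2.le⟩ hx.1

end Unimodal

theorem abs_min_unimodal_sub_le {g h : ℝ → ℝ} {p q a b k ε : ℝ}
    (hg : AntitoneOn g (Icc a q)) (hh : MonotoneOn h (Icc p b))
    (hb : b ∈ Icc p q) (hk : k ∈ Icc p q) (hgh : ∀ x ∈ Icc p q, |g x - h x| ≤ ε) :
    |min (g (min k a)) (h (max b k)) - g k| ≤ ε := by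
  have hghk := abs_le.mp (hgh k hk)
  have hleft : g k ≤ g (min k a) := by
    rcases le_total k a with hka | hak
    · rw [min_eq_left hka]
    · rw [min_eq_right hak]
      exact hg ⟨le_rfl, hak.trans hk.2⟩ ⟨hak, hk.2⟩ hak
  have hright : h k ≤ h (max b k) := by
    rcases le_total b k with hbk | hkb
    · rw [max_eq_right hbk]
    · rw [max_eq_left hkb]
      exact hh ⟨hk.1, hkb⟩ ⟨hb.1, le_rfl⟩ hkb
  have hupper : min (g (min k a)) (h (max b k)) ≤ g k + ε := by
    rcases le_total k a with hka | hak
    · rw [min_eq_left hka]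
      linarith [min_le_left (g k) (h (max b k))]
    rcases le_total b k with hbk | hkb
    · rw [max_eq_right hbk]
      linarith [min_le_right (g (min k a)) (h k)]
    · rw [max_eq_left hkb]
      have hgb : g b ≤ g k := hg ⟨hak, hk.2⟩ ⟨hak.trans hkb, hb.2⟩ hkb
      linarith [min_le_right (g (min k a)) (h b), (abs_le.mp (hgh b hb)).1]
  have hlower : g k - ε ≤ min (g (min k a)) (h (max b k)) :=
    le_min (by linarith) (by linarith)
  exact abs_le.mpr ⟨by linarith, by linarith⟩

theorem flux_sub_flux (Vmin Vmax : ℝ → ℝ) (ρ a b : ℝ) :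
    flux Vmin Vmax ρ a - flux Vmin Vmax ρ b = (a - b) * (ρ * (Vmax ρ - Vmin ρ)) := by
  unfold flux
  ring

theorem continuousOn_flux {Vmin Vmax : ℝ → ℝ} {s : Set ℝ} (hVmin : ContinuousOn Vmin s)
    (hVmax : ContinuousOn Vmax s) (ω : ℝ) : ContinuousOn (fun p => flux Vmin Vmax p ω) s := by
  unfold flux
  fun_prop

theorem exists_abs_flux_sub_flux_le {Vmin Vmax : ℝ → ℝ} {s : Set ℝ} (hs : IsCompact s)
    (hVmin : ContinuousOn Vmin s) (hVmax : ContinuousOn Vmax s) :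
    ∃ C > 0, ∀ ρ ∈ s, ∀ a b : ℝ, |flux Vmin Vmax ρ a - flux Vmin Vmax ρ b| ≤ C * |a - b| := by
  obtain ⟨C, hC⟩ := hs.exists_bound_of_continuousOn
    (show ContinuousOn (fun ρ => ρ * (Vmax ρ - Vmin ρ)) s by fun_prop)
  refine ⟨max C 1, by positivity, fun ρ hρ a b => ?_⟩
  rw [flux_sub_flux, abs_mul, mul_comm]
  exact mul_le_mul_of_nonneg_right ((hC ρ hρ).trans (le_max_left C 1)) (abs_nonneg _)

theorem interface_flux_consistency_general
    (Vmin Vmax : ℝ → ℝ)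
    (hVminLip : ∃ K, LipschitzOnWith K Vmin (Icc 0 1))
    (hVmaxLip : ∃ K, LipschitzOnWith K Vmax (Icc 0 1))
    (hconc : ∀ ρ ∈ Icc (0:ℝ) 1, ∀ ω ∈ Icc (0:ℝ) 1,
      deriv (deriv (fun p => flux Vmin Vmax p ω)) ρ < 0)
    (α : ℝ → ℝ)
    (hαmem : ∀ ω ∈ Icc (0:ℝ) 1, α ω ∈ Icc (0:ℝ) 1)
    (hαcrit : ∀ ω ∈ Icc (0:ℝ) 1, deriv (fun p => flux Vmin Vmax p ω) (α ω) = 0)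
    (w : ℕ → ℤ → ℝ) (hw : ∀ n j, w n j ∈ Icc (0:ℝ) 1) :
    ∃ μ > 0, ∀ k ∈ Icc (0:ℝ) 1, ∀ (n : ℕ) (j : ℤ),
      |interfaceFlux Vmin Vmax α (w n j) (w n (j+1)) k k - flux Vmin Vmax k (w n j)|
        ≤ μ * |w n (j+1) - w n j| := by
  obtain ⟨_, hVmin⟩ := hVminLip
  obtain ⟨_, hVmax⟩ := hVmaxLip
  obtain ⟨C, hC, hflux⟩ :=
    exists_abs_flux_sub_flux_le isCompact_Icc hVmin.continuousOn hVmax.continuousOn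
  refine ⟨C, hC, fun k hk n j => ?_⟩
  have hcont := continuousOn_flux hVmin.continuousOn hVmax.continuousOn
  have hl := hw n j
  have hr := hw n (j + 1)
  exact abs_min_unimodal_sub_le
    (antitoneOn_Icc_of_deriv_eq_zero_of_deriv_deriv_neg (hcont _) (hconc · · _ hl)
      (hαmem _ hl).1 (hαcrit _ hl))
    (monotoneOn_Icc_of_deriv_eq_zero_of_deriv_deriv_neg (hcont _) (hconc · · _ hr)
      (hαmem _ hr).2 (hαcrit _ hr))
    (hαmem _ hr) hk fun x hx => by
      rw [abs_sub_comm (w n (j + 1))]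
      exact hflux x hx _ _

/-- Consistency estimate: `|F_{j+1/2}ⁿ(k,k) − f_jⁿ(k)| ≤ μ |w_{j+1}ⁿ − w_jⁿ|`. -/
theorem interface_flux_consistency
    (Vmin Vmax : ℝ → ℝ)
    (hVminLip : ∃ K, LipschitzOnWith K Vmin (Icc 0 1))
    (hVmaxLip : ∃ K, LipschitzOnWith K Vmax (Icc 0 1))
    (hVminPos : ∀ ρ ∈ Icc (0:ℝ) 1, 0 ≤ Vmin ρ)
    (hVmaxPos : ∀ ρ ∈ Icc (0:ℝ) 1, 0 ≤ Vmax ρ)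
    (hVminAnti : AntitoneOn Vmin (Icc 0 1))
    (hVmaxAnti : AntitoneOn Vmax (Icc 0 1))
    (hord : ∀ ρ ∈ Icc (0:ℝ) 1, Vmin ρ ≤ Vmax ρ)
    (hVmin1 : Vmin 1 = 0) (hVmax1 : Vmax 1 = 0)
    (hconc : ∀ ρ ∈ Icc (0:ℝ) 1, ∀ ω ∈ Icc (0:ℝ) 1,
      deriv (deriv (fun p => flux Vmin Vmax p ω)) ρ < 0)
    (α : ℝ → ℝ)
    (hαLip : ∃ K, LipschitzOnWith K α (Icc 0 1))
    (hαmem : ∀ ω ∈ Icc (0:ℝ) 1, α ω ∈ Icc (0:ℝ) 1)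
    (hαcrit : ∀ ω ∈ Icc (0:ℝ) 1, deriv (fun p => flux Vmin Vmax p ω) (α ω) = 0)
    (w : ℕ → ℤ → ℝ) (hw : ∀ n j, w n j ∈ Icc (0:ℝ) 1) :
    ∃ μ > 0, ∀ k ∈ Icc (0:ℝ) 1, ∀ (n : ℕ) (j : ℤ),
      |interfaceFlux Vmin Vmax α (w n j) (w n (j+1)) k k - flux Vmin Vmax k (w n j)|
        ≤ μ * |w n (j+1) - w n j| :=
  interface_flux_consistency_general Vmin Vmax hVminLip hVmaxLip hconc α hαmem hαcrit w hw
end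

section
/- Discrete L¹ time-continuity: under the CFL condition with density bounded below by ε and interface fluxes bounded by L, the scheme update for w satisfies Σ_{|j|≤J} |w_j^{n+1} − w_j^n| Δx ≤ (L/ε) TV(w_o) Δt for every J, where TV(w_Δ(t^n)) ≤ TV(w_o). -/
/-!
Each increment of the upwind update is `w_j^{n+1} − w_jⁿ = λ s_{j-1/2} (w_{j-1}ⁿ − w_jⁿ)`, so after
multiplying by `Δx = Δt / λ` and bounding the speed by `L/ε`, the `L¹` increment over any window is at
most `(L/ε) Δt` times the variation of `wⁿ` over that window, hence at most `(L/ε) Δt TV(w_o)`.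
-/

open Set

section UpwindStep

variable {dx dt : ℝ} {s w wnew : ℤ → ℝ}

lemma abs_upwind_increment_mul (hdx : 0 < dx) (hdt : 0 ≤ dt) {j : ℤ} (hsj : 0 ≤ s j)
    (hwnew : wnew j = (1 - (dt / dx) * s j) * w j + (dt / dx) * s j * w (j - 1)) :
    |wnew j - w j| * dx = dt * s j * |w j - w (j - 1)| := by
  have hincr : wnew j - w j = (dt / dx) * s j * (w (j - 1) - w j) := by
    rw [hwnew]; ring
  rw [hincr, abs_mul, abs_of_nonneg (by positivity), abs_sub_comm]
  field_simp

lemma sum_abs_upwind_increment_mul_le (hdx : 0 < dx) (hdt : 0 ≤ dt) {S : ℝ}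
    (hs : ∀ j, s j ∈ Icc (0 : ℝ) S)
    (hwnew : ∀ j, wnew j = (1 - (dt / dx) * s j) * w j + (dt / dx) * s j * w (j - 1))
    (A : Finset ℤ) :
    ∑ j ∈ A, |wnew j - w j| * dx ≤ S * dt * ∑ j ∈ A, |w j - w (j - 1)| := by
  rw [Finset.mul_sum]
  refine Finset.sum_le_sum fun j _ => ?_
  rw [abs_upwind_increment_mul hdx hdt (hs j).1 (hwnew j), mul_comm S dt]
  gcongr
  exact (hs j).2

end UpwindStep

theorem transport_update_time_continuity_general
    (eps L dx dt TV0 : ℝ)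
    (hdx : 0 < dx) (hdt : 0 < dt)
    (w wnew s : ℤ → ℝ)
    (hs : ∀ j, s j ∈ Icc (0:ℝ) (L / eps))
    (hwnew : ∀ j, wnew j = (1 - (dt / dx) * s j) * w j + (dt / dx) * s j * w (j-1))
    -- total variation of `(w_jⁿ)_j` is bounded by `TV(w_o)`
    (hTV : ∀ A : Finset ℤ, ∑ j ∈ A, |w j - w (j-1)| ≤ TV0) :
    ∀ J : ℕ, ∑ j ∈ Finset.Icc (-(J:ℤ)) (J:ℤ), |wnew j - w j| * dx ≤ (L / eps) * TV0 * dt := by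
  intro J
  have hspeed : 0 ≤ L / eps := (hs 0).1.trans (hs 0).2
  calc ∑ j ∈ Finset.Icc (-(J:ℤ)) (J:ℤ), |wnew j - w j| * dx
      ≤ L / eps * dt * ∑ j ∈ Finset.Icc (-(J:ℤ)) (J:ℤ), |w j - w (j - 1)| :=
        sum_abs_upwind_increment_mul_le hdx hdt.le hs hwnew _
    _ ≤ L / eps * dt * TV0 := by gcongr; exact hTV _
    _ = L / eps * TV0 * dt := by ring

/-- Discrete `L¹` time-continuity of the transport update:
`Σ_{|j|≤J} |w_j^{n+1} − w_jⁿ| Δx ≤ (L/ε) · TV(w_o) · Δt`. -/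
theorem transport_update_time_continuity
    (eps L dx dt TV0 : ℝ)
    (heps : 0 < eps) (hdx : 0 < dx) (hdt : 0 < dt) (hL : 0 ≤ L)
    (u w wnew s : ℤ → ℝ)
    (hu : ∀ j, u j ∈ Icc eps 1)
    (hw : ∀ j, w j ∈ Icc (0:ℝ) 1)
    (hs : ∀ j, s j ∈ Icc (0:ℝ) (L / eps))
    (hwnew : ∀ j, wnew j = (1 - (dt / dx) * s j) * w j + (dt / dx) * s j * w (j-1))
    -- total variation of `(w_jⁿ)_j` is bounded by `TV(w_o)`
    (hTV : ∀ A : Finset ℤ, ∑ j ∈ A, |w j - w (j-1)| ≤ TV0) :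
    ∀ J : ℕ, ∑ j ∈ Finset.Icc (-(J:ℤ)) (J:ℤ), |wnew j - w j| * dx ≤ (L / eps) * TV0 * dt :=
  transport_update_time_continuity_general eps L dx dt TV0 hdx hdt w wnew s hs hwnew hTV
end
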